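/- arXiv:2302.07457 — 2 statements merged into one kernel-verified Lean document; each statement's English description precedes it below -/
import Mathlib

section
/- Under any reward parameter θ, the likelihood objective decomposes as L(θ) = L̂(θ) + (γ/(1−γ)) · E_{(s,a)∼d^E}[ Σ_{s'∈S} V_θ(s') ( P̂(s'|s,a) − P(s'|s,a) ) ], where L̂ is the surrogate objective. -/
/-!
Since `π_θ` is the softmax of `Q_θ`, `log π_θ(a|s) = Q_θ(s,a) - V_θ(s)`, and the soft Bellman
equation splits this as `r + U + (γ (P V_θ)(s,a) - V_θ(s)) + γ ((P̂ - P) V_θ)(s,a)`. Along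
expert trajectories in the true MDP the middle term telescopes: its discounted expectation is
`-E_η[V_θ(s₀)]`. The discounted expectation of the last term is `1/(1-γ)` times its mean
under `dᴱ`.
-/

open Real BigOperators Finset

noncomputable section

/-- `P` is a transition kernel: each row `P s a ·` is a probability distribution. -/
def IsKernel {S A : Type} [Fintype S] (P : S → A → S → ℝ) : Prop :=
  (∀ s a s', 0 ≤ P s a s') ∧ ∀ s a, ∑ s', P s a s' = 1

/-- `p` is a policy: each `p s ·` is a probability distribution over actions. -/
def IsPolicy {S A : Type} [Fintype A] (p : S → A → ℝ) : Prop :=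
  (∀ s a, 0 ≤ p s a) ∧ ∀ s, ∑ a, p s a = 1

/-- `η` is a probability distribution over states. -/
def IsDist {S : Type} [Fintype S] (η : S → ℝ) : Prop :=
  (∀ s, 0 ≤ η s) ∧ ∑ s, η s = 1

/-- Distribution of the state at time `t` under initial distribution `η`,
policy `pol` and transition kernel `P`. -/
def stateDist {S A : Type} [Fintype S] [Fintype A]
    (P : S → A → S → ℝ) (pol : S → A → ℝ) (η : S → ℝ) : ℕ → S → ℝ
  | 0 => η
  | (t + 1) => fun s' => ∑ s, ∑ a, stateDist P pol η t s * pol s a * P s a s'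

/-- `E_{τ ∼ (η, pol, P)} [ ∑_t γ^t f(s_t, a_t) ]`. -/
def discSum {S A : Type} [Fintype S] [Fintype A]
    (γ : ℝ) (P : S → A → S → ℝ) (pol : S → A → ℝ) (η : S → ℝ) (f : S → A → ℝ) : ℝ :=
  ∑' t : ℕ, γ ^ t * ∑ s, ∑ a, stateDist P pol η t s * pol s a * f s a

/-- Discounted state-action visitation measure
`d(s,a) = (1-γ) pol(a|s) ∑_t γ^t Pr(s_t = s)`. -/
def visit {S A : Type} [Fintype S] [Fintype A]
    (γ : ℝ) (P : S → A → S → ℝ) (pol : S → A → ℝ) (η : S → ℝ) (s : S) (a : A) : ℝ :=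
  (1 - γ) * pol s a * ∑' t : ℕ, γ ^ t * stateDist P pol η t s

/-- Log-sum-exp soft value function `V(s) = log ∑_a exp Q(s,a)`. -/
def lse {S A : Type} [Fintype A] (Q : S → A → ℝ) (s : S) : ℝ :=
  Real.log (∑ a, Real.exp (Q s a))

/-- Softmax policy `π(a|s) = exp Q(s,a) / ∑_{a'} exp Q(s,a')`. -/
def softmax {S A : Type} [Fintype A] (Q : S → A → ℝ) (s : S) (a : A) : ℝ :=
  Real.exp (Q s a) / ∑ a', Real.exp (Q s a')

lemma log_softmax {S A : Type} [Fintype A] (Q : S → A → ℝ) (s : S) (a : A) :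
    Real.log (softmax Q s a) = Q s a - lse Q s := by
  have hpos : 0 < ∑ a', Real.exp (Q s a') := sum_pos (fun _ _ => exp_pos _) ⟨a, mem_univ a⟩
  rw [softmax, Real.log_div (exp_ne_zero _) hpos.ne', Real.log_exp, lse]

lemma summable_pow_mul_of_abs_le {γ C : ℝ} (hγ : |γ| < 1) {u : ℕ → ℝ}
    (hu : ∀ t, |u t| ≤ C) : Summable fun t => γ ^ t * u t := by
  refine ((summable_geometric_of_lt_one (abs_nonneg γ) hγ).mul_right C).of_norm_bounded
    fun t => ?_
  rw [Real.norm_eq_abs, abs_mul, abs_pow]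
  exact mul_le_mul_of_nonneg_left (hu t) (pow_nonneg (abs_nonneg γ) t)

lemma tsum_pow_mul_telescope {γ : ℝ} {u : ℕ → ℝ} (hu : Summable fun t => γ ^ t * u t) :
    ∑' t, γ ^ t * (γ * u (t + 1) - u t) = -u 0 := by
  have hshift : Summable fun t => γ ^ (t + 1) * u (t + 1) := (summable_nat_add_iff 1).mpr hu
  calc ∑' t, γ ^ t * (γ * u (t + 1) - u t)
      = ∑' t, γ ^ (t + 1) * u (t + 1) - ∑' t, γ ^ t * u t := by
        rw [← hshift.tsum_sub hu]
        exact tsum_congr fun t => by ring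
    _ = -u 0 := by rw [hu.tsum_eq_zero_add]; ring

section Trajectory

variable {S A : Type} [Fintype S] [Fintype A]
  {P : S → A → S → ℝ} {pol : S → A → ℝ} {η : S → ℝ} {γ : ℝ}

def expectAt (P : S → A → S → ℝ) (pol : S → A → ℝ) (η : S → ℝ) (f : S → A → ℝ) (t : ℕ) :
    ℝ :=
  ∑ s, ∑ a, stateDist P pol η t s * pol s a * f s a

lemma discSum_eq_tsum_expectAt (f : S → A → ℝ) :
    discSum γ P pol η f = ∑' t, γ ^ t * expectAt P pol η f t := rfl

lemma expectAt_add (f g : S → A → ℝ) (t : ℕ) :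
    expectAt P pol η (fun s a => f s a + g s a) t =
      expectAt P pol η f t + expectAt P pol η g t := by
  simp only [expectAt, mul_add, sum_add_distrib]

lemma expectAt_sub (f g : S → A → ℝ) (t : ℕ) :
    expectAt P pol η (fun s a => f s a - g s a) t =
      expectAt P pol η f t - expectAt P pol η g t := by
  simp only [expectAt, mul_sub, sum_sub_distrib]

lemma expectAt_const_mul (c : ℝ) (f : S → A → ℝ) (t : ℕ) :
    expectAt P pol η (fun s a => c * f s a) t = c * expectAt P pol η f t := by
  simp only [expectAt, mul_sum, mul_left_comm _ c]

lemma expectAt_of_state (hpol : IsPolicy pol) (V : S → ℝ) (t : ℕ) :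
    expectAt P pol η (fun s _ => V s) t = ∑ s, stateDist P pol η t s * V s := by
  refine sum_congr rfl fun s _ => ?_
  rw [← sum_mul, ← mul_sum, hpol.2, mul_one]

lemma expectAt_transition (V : S → ℝ) (t : ℕ) :
    expectAt P pol η (fun s a => ∑ s', P s a s' * V s') t =
      ∑ s', stateDist P pol η (t + 1) s' * V s' := by
  simp only [expectAt, stateDist, mul_sum, sum_mul]
  refine Eq.trans (sum_congr rfl fun s _ => ?_) sum_comm
  rw [sum_comm]
  exact sum_congr rfl fun _ _ => sum_congr rfl fun _ _ => by ring

lemma stateDist_nonneg (hP : IsKernel P) (hpol : IsPolicy pol) (hη : IsDist η) (t : ℕ) (s : S) :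
    0 ≤ stateDist P pol η t s := by
  induction t generalizing s with
  | zero => exact hη.1 s
  | succ t ih =>
    exact sum_nonneg fun s₀ _ => sum_nonneg fun a _ =>
      mul_nonneg (mul_nonneg (ih s₀) (hpol.1 s₀ a)) (hP.1 s₀ a s)

lemma sum_stateDist (hP : IsKernel P) (hpol : IsPolicy pol) (hη : IsDist η) (t : ℕ) :
    ∑ s, stateDist P pol η t s = 1 := by
  induction t with
  | zero => exact hη.2
  | succ t ih =>
    have h := expectAt_transition (P := P) (pol := pol) (η := η) (fun _ => (1 : ℝ)) t
    simp only [mul_one, hP.2] at h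
    rw [← h, expectAt_of_state hpol (fun _ => 1)]
    simpa only [mul_one] using ih

lemma stateDist_le_one (hP : IsKernel P) (hpol : IsPolicy pol) (hη : IsDist η) (t : ℕ) (s : S) :
    stateDist P pol η t s ≤ 1 :=
  sum_stateDist hP hpol hη t ▸
    single_le_sum (fun s' _ => stateDist_nonneg hP hpol hη t s') (mem_univ s)

lemma abs_expectAt_le (hP : IsKernel P) (hpol : IsPolicy pol) (hη : IsDist η)
    {f : S → A → ℝ} {C : ℝ} (hC : ∀ s a, |f s a| ≤ C) (t : ℕ) :
    |expectAt P pol η f t| ≤ C := by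
  have hw : ∀ s a, 0 ≤ stateDist P pol η t s * pol s a := fun s a =>
    mul_nonneg (stateDist_nonneg hP hpol hη t s) (hpol.1 s a)
  calc |expectAt P pol η f t|
      ≤ ∑ s, ∑ a, |stateDist P pol η t s * pol s a * f s a| :=
        (abs_sum_le_sum_abs _ _).trans (sum_le_sum fun s _ => abs_sum_le_sum_abs _ _)
    _ ≤ expectAt P pol η (fun _ _ => C) t := by
        refine sum_le_sum fun s _ => sum_le_sum fun a _ => ?_
        rw [abs_mul, abs_of_nonneg (hw s a)]
        exact mul_le_mul_of_nonneg_left (hC s a) (hw s a)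
    _ = C := by rw [expectAt_of_state hpol, ← sum_mul, sum_stateDist hP hpol hη, one_mul]

lemma summable_pow_mul_expectAt (hγ : |γ| < 1) (hP : IsKernel P) (hpol : IsPolicy pol)
    (hη : IsDist η) (f : S → A → ℝ) :
    Summable fun t => γ ^ t * expectAt P pol η f t := by
  obtain ⟨C, hC⟩ := Finite.exists_le fun p : S × A => |f p.1 p.2|
  exact summable_pow_mul_of_abs_le hγ (abs_expectAt_le hP hpol hη fun s a => hC (s, a))

lemma discSum_add (hγ : |γ| < 1) (hP : IsKernel P) (hpol : IsPolicy pol) (hη : IsDist η)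
    (f g : S → A → ℝ) :
    discSum γ P pol η (fun s a => f s a + g s a) =
      discSum γ P pol η f + discSum γ P pol η g := by
  simp only [discSum_eq_tsum_expectAt, expectAt_add, mul_add]
  exact (summable_pow_mul_expectAt hγ hP hpol hη f).tsum_add
    (summable_pow_mul_expectAt hγ hP hpol hη g)

lemma discSum_const_mul (c : ℝ) (f : S → A → ℝ) :
    discSum γ P pol η (fun s a => c * f s a) = c * discSum γ P pol η f := by
  simp only [discSum_eq_tsum_expectAt, expectAt_const_mul, mul_left_comm _ c, tsum_mul_left]

lemma discSum_bellman_residual (hγ : |γ| < 1) (hP : IsKernel P) (hpol : IsPolicy pol)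
    (hη : IsDist η) (V : S → ℝ) :
    discSum γ P pol η (fun s a => γ * ∑ s', P s a s' * V s' - V s) = -∑ s, η s * V s := by
  set u : ℕ → ℝ := fun t => ∑ s, stateDist P pol η t s * V s
  have hu : Summable fun t => γ ^ t * u t := by
    simpa only [expectAt_of_state hpol] using
      summable_pow_mul_expectAt hγ hP hpol hη fun s _ => V s
  simp only [discSum_eq_tsum_expectAt, expectAt_sub, expectAt_const_mul, expectAt_transition,
    expectAt_of_state hpol]
  exact tsum_pow_mul_telescope hu

lemma sum_visit_mul (hγ : |γ| < 1) (hP : IsKernel P) (hpol : IsPolicy pol) (hη : IsDist η)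
    (f : S → A → ℝ) :
    ∑ s, ∑ a, visit γ P pol η s a * f s a = (1 - γ) * discSum γ P pol η f := by
  have hD : ∀ s, Summable fun t => γ ^ t * stateDist P pol η t s := fun s =>
    summable_pow_mul_of_abs_le hγ fun t => abs_le.mpr
      ⟨by linarith [stateDist_nonneg hP hpol hη t s], stateDist_le_one hP hpol hη t s⟩
  calc ∑ s, ∑ a, visit γ P pol η s a * f s a
      = (1 - γ) * ∑ s, (∑' t, γ ^ t * stateDist P pol η t s) * ∑ a, pol s a * f s a := by
        simp only [visit, mul_sum]
        exact sum_congr rfl fun s _ => sum_congr rfl fun a _ => by ring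
    _ = (1 - γ) * ∑' t, ∑ s, γ ^ t * stateDist P pol η t s * ∑ a, pol s a * f s a := by
        simp only [← tsum_mul_right]
        rw [Summable.tsum_finsetSum fun s _ => (hD s).mul_right _]
    _ = (1 - γ) * discSum γ P pol η f := by
        simp only [discSum, mul_sum]
        exact congrArg _ (tsum_congr fun t => sum_congr rfl fun s _ =>
          sum_congr rfl fun a _ => by ring)

end Trajectory

theorem stmt0_general {S A : Type} [Fintype S] [Fintype A] (d : ℕ)
    (γ : ℝ) (hγ : γ ∈ Set.Ioo (0 : ℝ) 1)
    (P : S → A → S → ℝ) (hP : IsKernel P)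
    (Phat : S → A → S → ℝ)
    (η : S → ℝ) (hη : IsDist η)
    (piE : S → A → ℝ) (hpiE : IsPolicy piE)
    (r : S → A → EuclideanSpace ℝ (Fin d) → ℝ) (U : S → A → ℝ)
    (Q : EuclideanSpace ℝ (Fin d) → S → A → ℝ)
    (hQ : ∀ θ s a, Q θ s a = r s a θ + U s a + γ * ∑ s', Phat s a s' * lse (Q θ) s')
    (θ : EuclideanSpace ℝ (Fin d)) :
    discSum γ P piE η (fun s a => Real.log (softmax (Q θ) s a)) =
      (discSum γ P piE η (fun s a => r s a θ + U s a) - ∑ s, η s * lse (Q θ) s)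
      + γ / (1 - γ) *
          ∑ s, ∑ a, visit γ P piE η s a *
            ∑ s', lse (Q θ) s' * (Phat s a s' - P s a s') := by
  have hγ' : |γ| < 1 := abs_lt.mpr ⟨by linarith [hγ.1], hγ.2⟩
  set V := lse (Q θ)
  have hlog : (fun s a => Real.log (softmax (Q θ) s a)) = fun s a =>
      (r s a θ + U s a + (γ * ∑ s', P s a s' * V s' - V s)) +
        γ * ∑ s', V s' * (Phat s a s' - P s a s') := by
    funext s a
    have hsplit : ∑ s', Phat s a s' * V s' =
        ∑ s', P s a s' * V s' + ∑ s', V s' * (Phat s a s' - P s a s') := by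
      rw [← sum_add_distrib]
      exact sum_congr rfl fun _ _ => by ring
    rw [log_softmax, hQ, hsplit]
    ring
  rw [hlog, discSum_add hγ' hP hpiE hη, discSum_add hγ' hP hpiE hη,
    discSum_bellman_residual hγ' hP hpiE hη, discSum_const_mul, sum_visit_mul hγ' hP hpiE hη]
  field_simp [(by linarith [hγ.2] : (1 : ℝ) - γ ≠ 0)]
  ring

/-- **Lemma 1, objective decomposition.**
Under any reward parameter `θ`, the likelihood objective
`L(θ) = E_{τ ∼ (η, πᴱ, P)}[∑_t γ^t log π_θ(a_t|s_t)]` decomposes as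
`L(θ) = L̂(θ) + γ/(1-γ) · E_{(s,a) ∼ dᴱ}[ ∑_{s'} V_θ(s') (P̂(s'|s,a) - P(s'|s,a)) ]`,
where `L̂` is the surrogate objective, `V_θ = lse (Q θ)` is the optimal soft value
function and `π_θ = softmax (Q θ)` is the optimal entropy-regularized policy of the
conservative MDP with kernel `P̂` and reward `r(·,·;θ) + U`. -/
theorem stmt0 {S A : Type} [Fintype S] [Fintype A] [Nonempty S] [Nonempty A] (d : ℕ)
    (γ : ℝ) (hγ : γ ∈ Set.Ioo (0 : ℝ) 1)
    (P : S → A → S → ℝ) (hP : IsKernel P)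
    (Phat : S → A → S → ℝ) (hPhat : IsKernel Phat)
    (η : S → ℝ) (hη : IsDist η)
    (piE : S → A → ℝ) (hpiE : IsPolicy piE)
    (r : S → A → EuclideanSpace ℝ (Fin d) → ℝ) (U : S → A → ℝ)
    (Q : EuclideanSpace ℝ (Fin d) → S → A → ℝ)
    (hQ : ∀ θ s a, Q θ s a = r s a θ + U s a + γ * ∑ s', Phat s a s' * lse (Q θ) s')
    (θ : EuclideanSpace ℝ (Fin d)) :
    discSum γ P piE η (fun s a => Real.log (softmax (Q θ) s a)) =
      (discSum γ P piE η (fun s a => r s a θ + U s a) - ∑ s, η s * lse (Q θ) s)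
      + γ / (1 - γ) *
          ∑ s, ∑ a, visit γ P piE η s a *
            ∑ s', lse (Q θ) s' * (Phat s a s' - P s a s') :=
  stmt0_general d γ hγ P hP Phat η hη piE hpiE r U Q hQ θ
end
end

section
/- Assuming |r(s,a;θ)| ≤ C_r and |U(s,a)| ≤ C_u for all s, a, θ, the gap between the likelihood objective and the surrogate objective satisfies, for every reward parameter θ: |L(θ) − L̂(θ)| ≤ (γ C_v/(1−γ)) · E_{(s,a)∼d^E}[ ||P(·|s,a) − P̂(·|s,a)||₁ ], where C_v = (C_r + C_u + log|A|)/(1−γ). -/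
open Real BigOperators Finset

noncomputable section

section Aux

variable {S A : Type} [Fintype S] [Fintype A]

lemma aux_sd_nonneg {P : S → A → S → ℝ} {pol : S → A → ℝ} {η : S → ℝ}
    (hP : ∀ s a s', 0 ≤ P s a s') (hpol : ∀ s a, 0 ≤ pol s a) (hη : ∀ s, 0 ≤ η s) :
    ∀ t s, 0 ≤ stateDist P pol η t s := by
  intro t
  induction t with
  | zero => exact hη
  | succ t ih =>
    intro s'
    refine Finset.sum_nonneg fun s _ => Finset.sum_nonneg fun a _ => ?_
    exact mul_nonneg (mul_nonneg (ih s) (hpol s a)) (hP s a s')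

lemma aux_sd_sum {P : S → A → S → ℝ} {pol : S → A → ℝ} {η : S → ℝ}
    (hP : ∀ s a, ∑ s', P s a s' = 1) (hpol : ∀ s, ∑ a, pol s a = 1)
    (hη : ∑ s, η s = 1) : ∀ t, ∑ s, stateDist P pol η t s = 1 := by
  intro t
  induction t with
  | zero => exact hη
  | succ t ih =>
    show ∑ s', ∑ s, ∑ a, stateDist P pol η t s * pol s a * P s a s' = 1
    rw [Finset.sum_comm]
    have h : ∀ s, ∑ s', ∑ a, stateDist P pol η t s * pol s a * P s a s'
        = stateDist P pol η t s := by
      intro s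
      rw [Finset.sum_comm]
      have h2 : ∀ a, ∑ s', stateDist P pol η t s * pol s a * P s a s'
          = stateDist P pol η t s * pol s a := by
        intro a; rw [← Finset.mul_sum, hP s a, mul_one]
      rw [Finset.sum_congr rfl fun a _ => h2 a, ← Finset.mul_sum, hpol s, mul_one]
    rw [Finset.sum_congr rfl fun s _ => h s, ih]

lemma aux_abs_dsum_le {d : S → ℝ} {pol : S → A → ℝ} {g c : S → A → ℝ}
    (hd : ∀ s, 0 ≤ d s) (hp : ∀ s a, 0 ≤ pol s a) (hg : ∀ s a, |g s a| ≤ c s a) :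
    |∑ s, ∑ a, d s * pol s a * g s a| ≤ ∑ s, ∑ a, d s * pol s a * c s a := by
  calc |∑ s, ∑ a, d s * pol s a * g s a| ≤ ∑ s, |∑ a, d s * pol s a * g s a| :=
        Finset.abs_sum_le_sum_abs _ _
    _ ≤ ∑ s, ∑ a, |d s * pol s a * g s a| :=
        Finset.sum_le_sum fun s _ => Finset.abs_sum_le_sum_abs _ _
    _ ≤ ∑ s, ∑ a, d s * pol s a * c s a := by
        refine Finset.sum_le_sum fun s _ => Finset.sum_le_sum fun a _ => ?_
        rw [abs_mul, abs_mul, abs_of_nonneg (hd s), abs_of_nonneg (hp s a)]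
        exact mul_le_mul_of_nonneg_left (hg s a) (mul_nonneg (hd s) (hp s a))

lemma aux_wsum_eq {d : S → ℝ} {pol : S → A → ℝ} {K : ℝ}
    (hds : ∑ s, d s = 1) (hps : ∀ s, ∑ a, pol s a = 1) :
    ∑ s, ∑ a, d s * pol s a * K = K := by
  have h : ∀ s, ∑ a, d s * pol s a * K = d s * K := by
    intro s
    calc ∑ a, d s * pol s a * K = ∑ a, d s * K * pol s a :=
          Finset.sum_congr rfl fun a _ => by ring
      _ = d s * K * ∑ a, pol s a := by rw [Finset.mul_sum]
      _ = d s * K := by rw [hps s, mul_one]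
  rw [Finset.sum_congr rfl fun s _ => h s, ← Finset.sum_mul, hds, one_mul]

lemma aux_wb {d : S → ℝ} {pol : S → A → ℝ} {f : S → A → ℝ} {K : ℝ}
    (hd : ∀ s, 0 ≤ d s) (hds : ∑ s, d s = 1)
    (hp : ∀ s a, 0 ≤ pol s a) (hps : ∀ s, ∑ a, pol s a = 1)
    (hf : ∀ s a, |f s a| ≤ K) :
    |∑ s, ∑ a, d s * pol s a * f s a| ≤ K := by
  have h := aux_abs_dsum_le (c := fun _ _ => K) hd hp hf
  rwa [aux_wsum_eq hds hps] at h

lemma aux_wb1 {d : S → ℝ} {g : S → ℝ} {K : ℝ} (hd : ∀ s, 0 ≤ d s) (hds : ∑ s, d s = 1)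
    (hg : ∀ s, |g s| ≤ K) : |∑ s, d s * g s| ≤ K := by
  calc |∑ s, d s * g s| ≤ ∑ s, |d s * g s| := Finset.abs_sum_le_sum_abs _ _
    _ ≤ ∑ s, d s * K := Finset.sum_le_sum fun s _ => by
        rw [abs_mul, abs_of_nonneg (hd s)]
        exact mul_le_mul_of_nonneg_left (hg s) (hd s)
    _ = K := by rw [← Finset.sum_mul, hds, one_mul]

end Aux

lemma aux_summable {γ : ℝ} (hγ0 : 0 ≤ γ) (hγ1 : γ < 1) {c : ℕ → ℝ} {K : ℝ}
    (hc : ∀ t, |c t| ≤ K) : Summable fun t => γ ^ t * c t := by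
  refine Summable.of_norm_bounded (g := fun t => γ ^ t * K)
    ((summable_geometric_of_lt_one hγ0 hγ1).mul_right K) fun t => ?_
  rw [Real.norm_eq_abs, abs_mul, abs_pow, abs_of_nonneg hγ0]
  exact mul_le_mul_of_nonneg_left (hc t) (pow_nonneg hγ0 t)

lemma aux_telescope {γ : ℝ} (hγ0 : 0 ≤ γ) (hγ1 : γ < 1) {w : ℕ → ℝ} {K : ℝ}
    (hw : ∀ t, |w t| ≤ K)
    (hsum : Summable fun t => γ ^ (t + 1) * w (t + 1) - γ ^ t * w t) :
    ∑' t : ℕ, (γ ^ (t + 1) * w (t + 1) - γ ^ t * w t) = -w 0 := by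
  have htend : Filter.Tendsto (fun n => γ ^ n * w n) Filter.atTop (nhds 0) := by
    have hg : Filter.Tendsto (fun n : ℕ => K * γ ^ n) Filter.atTop (nhds 0) := by
      simpa using (tendsto_pow_atTop_nhds_zero_of_lt_one hγ0 hγ1).const_mul K
    refine squeeze_zero_norm (fun n => ?_) hg
    rw [Real.norm_eq_abs, abs_mul, abs_pow, abs_of_nonneg hγ0, mul_comm]
    exact mul_le_mul_of_nonneg_right (hw n) (pow_nonneg hγ0 n)
  have hps : Filter.Tendsto (fun n => ∑ i ∈ Finset.range n,
      (γ ^ (i + 1) * w (i + 1) - γ ^ i * w i)) Filter.atTop (nhds (0 - γ ^ 0 * w 0)) := by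
    have heq : ∀ n, ∑ i ∈ Finset.range n, (γ ^ (i + 1) * w (i + 1) - γ ^ i * w i)
        = γ ^ n * w n - γ ^ 0 * w 0 := fun n => Finset.sum_range_sub (fun i => γ ^ i * w i) n
    simp only [heq]
    exact htend.sub_const _
  have h := (hsum.hasSum_iff_tendsto_nat.2 hps).tsum_eq
  simpa using h

/-- **Lemma 2, objective gap bound.**
Assuming `|r(s,a;θ)| ≤ C_r` and `|U(s,a)| ≤ C_u` for all `s, a, θ`, for every reward
parameter `θ` the gap between the likelihood objective `L` and the surrogate
objective `L̂` satisfies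
`|L(θ) - L̂(θ)| ≤ (γ C_v / (1-γ)) · E_{(s,a) ∼ dᴱ}[ ‖P(·|s,a) - P̂(·|s,a)‖₁ ]`,
where `C_v = (C_r + C_u + log |A|)/(1-γ)`. -/
theorem stmt2 {S A : Type} [Fintype S] [Fintype A] [Nonempty S] [Nonempty A] (d : ℕ)
    (γ : ℝ) (hγ : γ ∈ Set.Ioo (0 : ℝ) 1)
    (P : S → A → S → ℝ) (hP : IsKernel P)
    (Phat : S → A → S → ℝ) (hPhat : IsKernel Phat)
    (η : S → ℝ) (hη : IsDist η)
    (piE : S → A → ℝ) (hpiE : IsPolicy piE)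
    (r : S → A → EuclideanSpace ℝ (Fin d) → ℝ) (U : S → A → ℝ)
    (Cr Cu : ℝ) (hCr : 0 < Cr) (hCu : 0 < Cu)
    (hr : ∀ s a θ, |r s a θ| ≤ Cr) (hU : ∀ s a, |U s a| ≤ Cu)
    (Q : EuclideanSpace ℝ (Fin d) → S → A → ℝ)
    (hQ : ∀ θ s a, Q θ s a = r s a θ + U s a + γ * ∑ s', Phat s a s' * lse (Q θ) s')
    (θ : EuclideanSpace ℝ (Fin d)) :
    |discSum γ P piE η (fun s a => Real.log (softmax (Q θ) s a)) -
        (discSum γ P piE η (fun s a => r s a θ + U s a) - ∑ s, η s * lse (Q θ) s)| ≤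
      γ * ((Cr + Cu + Real.log (Fintype.card A)) / (1 - γ)) / (1 - γ) *
        ∑ s, ∑ a, visit γ P piE η s a * ∑ s', |P s a s' - Phat s a s'| := by
  obtain ⟨hγ0, hγ1⟩ := hγ
  have h1γ : (0:ℝ) < 1 - γ := by linarith
  obtain ⟨hPn, hPs⟩ := hP
  obtain ⟨hHn, hHs⟩ := hPhat
  obtain ⟨hηn, hηs⟩ := hη
  obtain ⟨hpn, hps⟩ := hpiE
  set V : S → ℝ := lse (Q θ) with hVdef
  set Cv : ℝ := (Cr + Cu + Real.log (Fintype.card A)) / (1 - γ) with hCvdef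
  have hVs : ∀ s, V s = Real.log (∑ a, Real.exp (Q θ s a)) := fun s => rfl
  have hcard1 : (1:ℝ) ≤ (Fintype.card A : ℝ) := by exact_mod_cast Fintype.card_pos
  have hlogA : 0 ≤ Real.log (Fintype.card A) := Real.log_nonneg hcard1
  obtain ⟨s0, -, hs0⟩ := Finset.exists_max_image Finset.univ (fun s => |V s|) Finset.univ_nonempty
  have hQb : ∀ s a, |Q θ s a| ≤ Cr + Cu + γ * |V s0| := by
    intro s a
    rw [hQ θ s a, ← hVdef]
    have h1 : |∑ s', Phat s a s' * V s'| ≤ |V s0| := by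
      calc |∑ s', Phat s a s' * V s'| ≤ ∑ s', |Phat s a s' * V s'| :=
            Finset.abs_sum_le_sum_abs _ _
        _ ≤ ∑ s', Phat s a s' * |V s0| := by
            refine Finset.sum_le_sum fun s' _ => ?_
            rw [abs_mul, abs_of_nonneg (hHn s a s')]
            exact mul_le_mul_of_nonneg_left (hs0 s' (Finset.mem_univ _)) (hHn s a s')
        _ = |V s0| := by rw [← Finset.sum_mul, hHs, one_mul]
    calc |r s a θ + U s a + γ * ∑ s', Phat s a s' * V s'|
        ≤ |r s a θ| + |U s a| + |γ * ∑ s', Phat s a s' * V s'| := abs_add_three _ _ _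
      _ ≤ Cr + Cu + γ * |V s0| := by
          have h2 : |γ * ∑ s', Phat s a s' * V s'| ≤ γ * |V s0| := by
            rw [abs_mul, abs_of_nonneg hγ0.le]
            exact mul_le_mul_of_nonneg_left h1 hγ0.le
          linarith [hr s a θ, hU s a]
  have hexp_pos : ∀ s, 0 < ∑ a, Real.exp (Q θ s a) := fun s =>
    Finset.sum_pos (fun a _ => Real.exp_pos _) Finset.univ_nonempty
  have hVub : ∀ s, V s ≤ Real.log (Fintype.card A) + (Cr + Cu + γ * |V s0|) := by
    intro s
    have hle : ∑ a, Real.exp (Q θ s a)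
        ≤ (Fintype.card A : ℝ) * Real.exp (Cr + Cu + γ * |V s0|) := by
      calc ∑ a, Real.exp (Q θ s a) ≤ ∑ _a : A, Real.exp (Cr + Cu + γ * |V s0|) :=
            Finset.sum_le_sum fun a _ => Real.exp_le_exp.2 (abs_le.1 (hQb s a)).2
        _ = _ := by rw [Finset.sum_const, Finset.card_univ, nsmul_eq_mul]
    have h2 := Real.log_le_log (hexp_pos s) hle
    rw [Real.log_mul (by positivity) (Real.exp_ne_zero _), Real.log_exp] at h2
    rw [hVs s]; exact h2
  have hVlb : ∀ s, -(Cr + Cu + γ * |V s0|) ≤ V s := by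
    intro s
    have a0 : A := Classical.arbitrary A
    have h1 : Real.exp (Q θ s a0) ≤ ∑ a, Real.exp (Q θ s a) :=
      Finset.single_le_sum (fun a _ => (Real.exp_pos _).le) (Finset.mem_univ a0)
    have h2 : Q θ s a0 ≤ V s := by
      have h3 := Real.log_le_log (Real.exp_pos _) h1
      rw [Real.log_exp] at h3
      rw [hVs s]; exact h3
    linarith [(abs_le.1 (hQb s a0)).1]
  have hM0Cv : |V s0| ≤ Cv := by
    have h1 := hVub s0
    have h2 := hVlb s0
    have h3 : |V s0| ≤ Real.log (Fintype.card A) + (Cr + Cu + γ * |V s0|) :=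
      abs_le.2 ⟨by linarith, h1⟩
    rw [hCvdef, le_div_iff₀ h1γ]
    nlinarith
  have hVb : ∀ s, |V s| ≤ Cv := fun s => (hs0 s (Finset.mem_univ s)).trans hM0Cv
  have hCv0 : 0 ≤ Cv := (abs_nonneg _).trans hM0Cv
  have hQb' : ∀ s a, |Q θ s a| ≤ Cr + Cu + γ * Cv := fun s a =>
    (hQb s a).trans (by nlinarith [mul_le_mul_of_nonneg_left hM0Cv hγ0.le])
  -- log of the softmax policy
  have hlog : ∀ s a, Real.log (softmax (Q θ) s a)
      = r s a θ + U s a + γ * ∑ s', Phat s a s' * V s' - V s := by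
    intro s a
    show Real.log (Real.exp (Q θ s a) / ∑ a', Real.exp (Q θ s a')) = _
    rw [Real.log_div (Real.exp_ne_zero _) (ne_of_gt (hexp_pos s)), Real.log_exp,
      hQ θ s a, ← hVdef, ← hVs s]
  -- state distribution facts
  have hDn : ∀ t s, 0 ≤ stateDist P piE η t s := aux_sd_nonneg hPn hpn hηn
  have hDs : ∀ t, ∑ s, stateDist P piE η t s = 1 := aux_sd_sum hPs hps hηs
  set w : ℕ → ℝ := fun t => ∑ s, stateDist P piE η t s * V s with hwdef
  have hwb : ∀ t, |w t| ≤ Cv := fun t => aux_wb1 (hDn t) (hDs t) hVb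
  have hw0 : w 0 = ∑ s, η s * V s := rfl
  have e2 : ∀ t, w t = ∑ s, ∑ a, stateDist P piE η t s * piE s a * V s := by
    intro t
    show (∑ s, stateDist P piE η t s * V s) = _
    refine Finset.sum_congr rfl fun s _ => ?_
    calc stateDist P piE η t s * V s
        = (∑ a, piE s a) * (stateDist P piE η t s * V s) := by rw [hps s, one_mul]
      _ = ∑ a, stateDist P piE η t s * piE s a * V s := by
          rw [Finset.sum_mul]
          exact Finset.sum_congr rfl fun a _ => by ring
  have e1 : ∀ t, γ * w (t + 1) = ∑ s, ∑ a, stateDist P piE η t s * piE s a *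
      (γ * ∑ s', P s a s' * V s') := by
    intro t
    have h1 : w (t + 1) = ∑ s, ∑ a, stateDist P piE η t s * piE s a *
        (∑ s', P s a s' * V s') := by
      show (∑ s', stateDist P piE η (t + 1) s' * V s') = _
      have h2 : ∀ s' : S, stateDist P piE η (t + 1) s' * V s'
          = ∑ s, ∑ a, stateDist P piE η t s * piE s a * P s a s' * V s' := by
        intro s'
        show (∑ s, ∑ a, stateDist P piE η t s * piE s a * P s a s') * V s' = _
        rw [Finset.sum_mul]
        exact Finset.sum_congr rfl fun s _ => by rw [Finset.sum_mul]
      rw [Finset.sum_congr rfl fun s' _ => h2 s', Finset.sum_comm]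
      refine Finset.sum_congr rfl fun s _ => ?_
      rw [Finset.sum_comm]
      refine Finset.sum_congr rfl fun a _ => ?_
      rw [Finset.mul_sum]
      exact Finset.sum_congr rfl fun s' _ => by ring
    rw [h1, Finset.mul_sum]
    refine Finset.sum_congr rfl fun s _ => ?_
    rw [Finset.mul_sum]
    exact Finset.sum_congr rfl fun a _ => by ring
  -- the per-step decomposition
  have key : ∀ t, (∑ s, ∑ a, stateDist P piE η t s * piE s a * Real.log (softmax (Q θ) s a))
      - ∑ s, ∑ a, stateDist P piE η t s * piE s a * (r s a θ + U s a)
      = (γ * w (t + 1) - w t) + ∑ s, ∑ a, stateDist P piE η t s * piE s a *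
          (γ * ∑ s', (Phat s a s' - P s a s') * V s') := by
    intro t
    rw [e1 t, e2 t]
    simp only [← Finset.sum_sub_distrib, ← Finset.sum_add_distrib]
    refine Finset.sum_congr rfl fun s _ => Finset.sum_congr rfl fun a _ => ?_
    rw [hlog s a]
    have hsplit : ∑ s', Phat s a s' * V s'
        = ∑ s', P s a s' * V s' + ∑ s', (Phat s a s' - P s a s') * V s' := by
      rw [← Finset.sum_add_distrib]
      exact Finset.sum_congr rfl fun s' _ => by ring
    rw [hsplit]
    ring
  -- bounds for summability
  have hlogb : ∀ s a, |Real.log (softmax (Q θ) s a)| ≤ (Cr + Cu + γ * Cv) + Cv := by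
    intro s a
    have h1 : Real.log (softmax (Q θ) s a) = Q θ s a - V s := by
      rw [hlog s a, hQ θ s a, ← hVdef]
    rw [h1]
    calc |Q θ s a - V s| ≤ |Q θ s a| + |V s| := abs_sub _ _
      _ ≤ _ := add_le_add (hQb' s a) (hVb s)
  have hBptb : ∀ s a, |γ * ∑ s', (Phat s a s' - P s a s') * V s'|
      ≤ γ * (∑ s', |P s a s' - Phat s a s'|) * Cv := by
    intro s a
    have h1 : |∑ s', (Phat s a s' - P s a s') * V s'|
        ≤ (∑ s', |P s a s' - Phat s a s'|) * Cv := by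
      calc |∑ s', (Phat s a s' - P s a s') * V s'|
          ≤ ∑ s', |(Phat s a s' - P s a s') * V s'| := Finset.abs_sum_le_sum_abs _ _
        _ ≤ ∑ s', |P s a s' - Phat s a s'| * Cv := by
            refine Finset.sum_le_sum fun s' _ => ?_
            rw [abs_mul, abs_sub_comm]
            exact mul_le_mul_of_nonneg_left (hVb s') (abs_nonneg _)
        _ = _ := (Finset.sum_mul _ _ _).symm
    calc |γ * ∑ s', (Phat s a s' - P s a s') * V s'|
        = γ * |∑ s', (Phat s a s' - P s a s') * V s'| := by
          rw [abs_mul, abs_of_nonneg hγ0.le]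
      _ ≤ γ * ((∑ s', |P s a s' - Phat s a s'|) * Cv) :=
          mul_le_mul_of_nonneg_left h1 hγ0.le
      _ = γ * (∑ s', |P s a s' - Phat s a s'|) * Cv := by ring
  have hl1 : ∀ s a, ∑ s', |P s a s' - Phat s a s'| ≤ 2 := by
    intro s a
    calc ∑ s', |P s a s' - Phat s a s'| ≤ ∑ s', (P s a s' + Phat s a s') :=
          Finset.sum_le_sum fun s' _ =>
            abs_le.2 ⟨by linarith [hPn s a s', hHn s a s'],
              by linarith [hPn s a s', hHn s a s']⟩
      _ = 2 := by rw [Finset.sum_add_distrib, hPs, hHs]; norm_num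
  have hcb' : ∀ s a, γ * (∑ s', |P s a s' - Phat s a s'|) * Cv ≤ γ * 2 * Cv := by
    intro s a
    have h0 : 0 ≤ ∑ s', |P s a s' - Phat s a s'| :=
      Finset.sum_nonneg fun s' _ => abs_nonneg _
    have h1 : γ * (∑ s', |P s a s' - Phat s a s'|) ≤ γ * 2 :=
      mul_le_mul_of_nonneg_left (hl1 s a) hγ0.le
    exact mul_le_mul_of_nonneg_right h1 hCv0
  have hcb : ∀ s a, |γ * (∑ s', |P s a s' - Phat s a s'|) * Cv| ≤ γ * 2 * Cv := by
    intro s a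
    have h0 : 0 ≤ γ * (∑ s', |P s a s' - Phat s a s'|) * Cv := by
      have := Finset.sum_nonneg (fun s' (_ : s' ∈ Finset.univ) =>
        abs_nonneg (P s a s' - Phat s a s'))
      positivity
    rw [abs_of_nonneg h0]; exact hcb' s a
  -- summability of all the series involved
  have hS_log : Summable (fun t => γ ^ t * ∑ s, ∑ a, stateDist P piE η t s * piE s a *
      Real.log (softmax (Q θ) s a)) :=
    aux_summable hγ0.le hγ1 fun t => aux_wb (hDn t) (hDs t) hpn hps hlogb
  have hS_ru : Summable (fun t => γ ^ t * ∑ s, ∑ a, stateDist P piE η t s * piE s a *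
      (r s a θ + U s a)) :=
    aux_summable hγ0.le hγ1 fun t => aux_wb (hDn t) (hDs t) hpn hps
      (fun s a => (abs_add_le _ _).trans (add_le_add (hr s a θ) (hU s a)))
  have hS_B : Summable (fun t => γ ^ t * ∑ s, ∑ a, stateDist P piE η t s * piE s a *
      (γ * ∑ s', (Phat s a s' - P s a s') * V s')) :=
    aux_summable hγ0.le hγ1 fun t => aux_wb (hDn t) (hDs t) hpn hps
      (fun s a => (hBptb s a).trans (hcb' s a))
  have hS_b : Summable (fun t => γ ^ t * ∑ s, ∑ a, stateDist P piE η t s * piE s a *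
      (γ * (∑ s', |P s a s' - Phat s a s'|) * Cv)) :=
    aux_summable hγ0.le hγ1 fun t => aux_wb (hDn t) (hDs t) hpn hps hcb
  have hS_tel : Summable (fun t => γ ^ (t + 1) * w (t + 1) - γ ^ t * w t) := by
    have heq : (fun t => γ ^ (t + 1) * w (t + 1) - γ ^ t * w t)
        = fun t => γ ^ t * (γ * w (t + 1) - w t) := by
      funext t; rw [pow_succ]; ring
    rw [heq]
    refine aux_summable hγ0.le hγ1 (K := Cv + Cv) fun t => ?_
    calc |γ * w (t + 1) - w t| ≤ |γ * w (t + 1)| + |w t| := abs_sub _ _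
      _ ≤ Cv + Cv := by
          rw [abs_mul, abs_of_nonneg hγ0.le]
          have h1 := hwb (t + 1); have h2 := hwb t
          nlinarith [abs_nonneg (w (t + 1))]
  have hS_T : ∀ s : S, Summable (fun t => γ ^ t * stateDist P piE η t s) := by
    intro s
    refine aux_summable hγ0.le hγ1 (K := 1) fun t => ?_
    rw [abs_of_nonneg (hDn t s)]
    calc stateDist P piE η t s ≤ ∑ s', stateDist P piE η t s' :=
          Finset.single_le_sum (fun s' _ => hDn t s') (Finset.mem_univ s)
      _ = 1 := hDs t
  -- main identity: L - L̂ = model-mismatch series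
  have hterm : ∀ t, γ ^ t * (∑ s, ∑ a, stateDist P piE η t s * piE s a *
        Real.log (softmax (Q θ) s a))
      - γ ^ t * (∑ s, ∑ a, stateDist P piE η t s * piE s a * (r s a θ + U s a))
      = (γ ^ (t + 1) * w (t + 1) - γ ^ t * w t) + γ ^ t * (∑ s, ∑ a,
          stateDist P piE η t s * piE s a *
          (γ * ∑ s', (Phat s a s' - P s a s') * V s')) := by
    intro t
    rw [← mul_sub, key t, pow_succ]
    ring
  have hmain : discSum γ P piE η (fun s a => Real.log (softmax (Q θ) s a)) -
      (discSum γ P piE η (fun s a => r s a θ + U s a) - ∑ s, η s * V s)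
      = ∑' t : ℕ, γ ^ t * (∑ s, ∑ a, stateDist P piE η t s * piE s a *
          (γ * ∑ s', (Phat s a s' - P s a s') * V s')) := by
    have h1 : discSum γ P piE η (fun s a => Real.log (softmax (Q θ) s a)) -
        discSum γ P piE η (fun s a => r s a θ + U s a)
        = ∑' t : ℕ, ((γ ^ (t + 1) * w (t + 1) - γ ^ t * w t) + γ ^ t * (∑ s, ∑ a,
            stateDist P piE η t s * piE s a *
            (γ * ∑ s', (Phat s a s' - P s a s') * V s'))) := by
      show (∑' t : ℕ, γ ^ t * ∑ s, ∑ a, stateDist P piE η t s * piE s a *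
          Real.log (softmax (Q θ) s a))
        - (∑' t : ℕ, γ ^ t * ∑ s, ∑ a, stateDist P piE η t s * piE s a *
          (r s a θ + U s a)) = _
      rw [← Summable.tsum_sub hS_log hS_ru]
      exact tsum_congr fun t => hterm t
    have h2 : discSum γ P piE η (fun s a => Real.log (softmax (Q θ) s a)) -
        (discSum γ P piE η (fun s a => r s a θ + U s a) - ∑ s, η s * V s)
        = (discSum γ P piE η (fun s a => Real.log (softmax (Q θ) s a)) -
          discSum γ P piE η (fun s a => r s a θ + U s a)) + ∑ s, η s * V s := by ring
    rw [h2, h1, Summable.tsum_add hS_tel hS_B, aux_telescope hγ0.le hγ1 hwb hS_tel, ← hw0]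
    ring
  rw [hmain]
  -- bound the mismatch series
  have habs : |∑' t : ℕ, γ ^ t * (∑ s, ∑ a, stateDist P piE η t s * piE s a *
      (γ * ∑ s', (Phat s a s' - P s a s') * V s'))|
      ≤ ∑' t : ℕ, |γ ^ t * (∑ s, ∑ a, stateDist P piE η t s * piE s a *
        (γ * ∑ s', (Phat s a s' - P s a s') * V s'))| := by
    have hsab : Summable (fun t => ‖γ ^ t * (∑ s, ∑ a,
        stateDist P piE η t s * piE s a *
        (γ * ∑ s', (Phat s a s' - P s a s') * V s'))‖) := by
      simp only [Real.norm_eq_abs]; exact hS_B.abs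
    have h := norm_tsum_le_tsum_norm (f := fun t => γ ^ t * (∑ s, ∑ a,
      stateDist P piE η t s * piE s a * (γ * ∑ s', (Phat s a s' - P s a s') * V s')))
      hsab
    simp only [Real.norm_eq_abs] at h
    exact h
  have hle2 : ∑' t : ℕ, |γ ^ t * (∑ s, ∑ a, stateDist P piE η t s * piE s a *
      (γ * ∑ s', (Phat s a s' - P s a s') * V s'))|
      ≤ ∑' t : ℕ, γ ^ t * ∑ s, ∑ a, stateDist P piE η t s * piE s a *
        (γ * (∑ s', |P s a s' - Phat s a s'|) * Cv) := by
    refine Summable.tsum_le_tsum (fun t => ?_) hS_B.abs hS_b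
    rw [abs_mul, abs_pow, abs_of_nonneg hγ0.le]
    exact mul_le_mul_of_nonneg_left (aux_abs_dsum_le (hDn t) hpn hBptb)
      (pow_nonneg hγ0.le t)
  have hswap : (∑' t : ℕ, γ ^ t * ∑ s, ∑ a, stateDist P piE η t s * piE s a *
      (γ * (∑ s', |P s a s' - Phat s a s'|) * Cv))
      = ∑ s, ∑ a, (∑' t : ℕ, γ ^ t * stateDist P piE η t s) *
          (piE s a * (γ * (∑ s', |P s a s' - Phat s a s'|) * Cv)) := by
    have hre : ∀ t, γ ^ t * ∑ s, ∑ a, stateDist P piE η t s * piE s a *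
        (γ * (∑ s', |P s a s' - Phat s a s'|) * Cv)
        = ∑ s, ∑ a, (γ ^ t * stateDist P piE η t s) *
            (piE s a * (γ * (∑ s', |P s a s' - Phat s a s'|) * Cv)) := by
      intro t
      rw [Finset.mul_sum]
      refine Finset.sum_congr rfl fun s _ => ?_
      rw [Finset.mul_sum]
      exact Finset.sum_congr rfl fun a _ => by ring
    have hSsa : ∀ (s : S) (a : A), Summable (fun t => (γ ^ t * stateDist P piE η t s) *
        (piE s a * (γ * (∑ s', |P s a s' - Phat s a s'|) * Cv))) :=
      fun s a => (hS_T s).mul_right _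
    calc (∑' t : ℕ, γ ^ t * ∑ s, ∑ a, stateDist P piE η t s * piE s a *
          (γ * (∑ s', |P s a s' - Phat s a s'|) * Cv))
        = ∑' t : ℕ, ∑ s, ∑ a, (γ ^ t * stateDist P piE η t s) *
            (piE s a * (γ * (∑ s', |P s a s' - Phat s a s'|) * Cv)) := tsum_congr hre
      _ = ∑ s, ∑' t : ℕ, ∑ a, (γ ^ t * stateDist P piE η t s) *
            (piE s a * (γ * (∑ s', |P s a s' - Phat s a s'|) * Cv)) :=
          Summable.tsum_finsetSum fun s _ => summable_sum fun a _ => hSsa s a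
      _ = ∑ s, ∑ a, ∑' t : ℕ, (γ ^ t * stateDist P piE η t s) *
            (piE s a * (γ * (∑ s', |P s a s' - Phat s a s'|) * Cv)) :=
          Finset.sum_congr rfl fun s _ => Summable.tsum_finsetSum fun a _ => hSsa s a
      _ = _ := Finset.sum_congr rfl fun s _ => Finset.sum_congr rfl fun a _ =>
          tsum_mul_right
  have hfin : ∑ s, ∑ a, (∑' t : ℕ, γ ^ t * stateDist P piE η t s) *
      (piE s a * (γ * (∑ s', |P s a s' - Phat s a s'|) * Cv))
      = γ * Cv / (1 - γ) * ∑ s, ∑ a, visit γ P piE η s a *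
        ∑ s', |P s a s' - Phat s a s'| := by
    rw [Finset.mul_sum]
    refine Finset.sum_congr rfl fun s _ => ?_
    rw [Finset.mul_sum]
    refine Finset.sum_congr rfl fun a _ => ?_
    have hv : visit γ P piE η s a
        = (1 - γ) * piE s a * ∑' t : ℕ, γ ^ t * stateDist P piE η t s := rfl
    rw [hv]
    field_simp
  exact le_of_le_of_eq (habs.trans hle2) (hswap.trans hfin)
end
end
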